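/- The probability that there exists an index i with X_i ≥ 3α such that the number of indices j ≠ i with X_i − 3α ≤ X_j < X_i is at most (5/2)·α·(n−1) is at most n·exp(−α·(n−1)/24). -/

import Mathlib

/-!
Fix `i` and condition on `X i = x ≥ 3α`. The other `n - 1` coordinates fall independently in
`[x - 3α, x)` with probability exactly `3α`, so the exponential Markov inequality with parameter
`t` bounds the probability that at most `K` of them do by
`exp (t K - 3α (n - 1) (1 - e^{-t}))`. For `t = 1/6` and `K = (5/2) α (n - 1)` this is at most
`exp (-α (n - 1) / 24)` because `e^{-1/6} ≤ 61/72`; a union bound over `i` gives the factor `n`.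
-/

open MeasureTheory

noncomputable section

/-- The uniform probability measure on `[0,1]`. -/
def unif : Measure ℝ := volume.restrict (Set.Icc (0:ℝ) 1)

open ProbabilityTheory Real ENNReal Set

instance : IsProbabilityMeasure unif := ⟨by simp [unif]⟩

lemma lintegral_ite_mem_le_exp {Ω : Type*} [MeasurableSpace Ω] {μ : Measure Ω}
    [IsProbabilityMeasure μ] {S : Set Ω} [DecidablePred (· ∈ S)] (hS : MeasurableSet S)
    {b p : ℝ} (hb : 0 ≤ b) (hp : 0 ≤ p) (hμS : μ S = ENNReal.ofReal p) :
    ∫⁻ y, (if y ∈ S then ENNReal.ofReal b else 1) ∂μ ≤ ENNReal.ofReal (exp (-(p * (1 - b)))) := by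
  have hp1 : p ≤ 1 := ENNReal.ofReal_le_one.mp (hμS ▸ prob_le_one)
  rw [← lintegral_add_compl _ hS, setLIntegral_congr_fun hS fun y hy => if_pos hy,
    setLIntegral_congr_fun hS.compl fun y hy => if_neg hy, setLIntegral_const, setLIntegral_one,
    prob_compl_eq_one_sub hS, hμS, ← ofReal_mul hb, ← ofReal_one, ← ofReal_sub _ hp,
    ← ofReal_add (by positivity) (by linarith)]
  exact ofReal_le_ofReal (by linarith [add_one_le_exp (-(p * (1 - b)))])

lemma lintegral_pi_prod_eq_pow {α ι : Type*} [MeasurableSpace α] [Fintype ι] {μ : Measure α}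
    [IsProbabilityMeasure μ] {g : α → ℝ≥0∞} (hg : Measurable g) :
    ∫⁻ y, ∏ j, g (y j) ∂(Measure.pi fun _ : ι => μ) = (∫⁻ x, g x ∂μ) ^ Fintype.card ι := by
  rw [lintegral_prod_eq_prod_lintegral_of_indepFun _ _
    (iIndepFun_pi (X := fun _ => g) fun _ => hg.aemeasurable)
    fun j => hg.comp (measurable_pi_apply j)]
  simp [(measurePreserving_eval (fun _ : ι => μ) _).lintegral_comp hg]

lemma lintegral_pi_succAbove {α : Type*} [MeasurableSpace α] {μ : Measure α} [SigmaFinite μ]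
    {m : ℕ} (i : Fin (m + 1)) {F : α → (Fin m → α) → ℝ≥0∞}
    (hF : Measurable (Function.uncurry F)) :
    ∫⁻ X, F (X i) (fun j => X (i.succAbove j)) ∂(Measure.pi fun _ => μ) =
      ∫⁻ x, ∫⁻ y, F x y ∂(Measure.pi fun _ => μ) ∂μ := by
  have := (measurePreserving_piFinSuccAbove (fun _ => μ) i).lintegral_map_equiv
    (Function.uncurry F)
  rw [lintegral_prod _ hF.aemeasurable] at this
  exact this.symm

lemma card_filter_ne_eq_card_filter_succAbove {m : ℕ} (i : Fin (m + 1)) (p : Fin (m + 1) → Prop)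
    [DecidablePred p] :
    (Finset.univ.filter fun j => j ≠ i ∧ p j).card =
      (Finset.univ.filter fun j : Fin m => p (i.succAbove j)).card := by
  rw [← Finset.card_map i.succAboveEmb, Finset.map_filter']
  congr 1
  ext j
  rcases eq_or_ne j i with rfl | hj
  · simp
  · obtain ⟨k, rfl⟩ := Fin.exists_succAbove_eq hj
    simp

lemma unif_Ico {a b : ℝ} (ha : 0 ≤ a) (hb : b ≤ 1) : unif (Ico a b) = ENNReal.ofReal (b - a) := by
  rw [unif, Measure.restrict_apply measurableSet_Ico,
    inter_eq_left.2 (Ico_subset_Icc_self.trans (Icc_subset_Icc ha hb)), volume_Ico]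

lemma lintegral_pi_unif_prod_ite_Ico_le (m : ℕ) {w x b : ℝ} [DecidablePred (· ∈ Ico (x - w) x)]
    (hw : 0 ≤ w) (hwx : w ≤ x) (hx : x ≤ 1) (hb : 0 ≤ b) :
    ∫⁻ y, ∏ j : Fin m, (if y j ∈ Ico (x - w) x then ENNReal.ofReal b else 1)
        ∂(Measure.pi fun _ => unif) ≤ ENNReal.ofReal (exp (-(w * (1 - b)))) ^ m := by
  have hS : unif (Ico (x - w) x) = ENNReal.ofReal w := by
    rw [unif_Ico (sub_nonneg.2 hwx) hx, _root_.sub_sub_cancel]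
  rw [lintegral_pi_prod_eq_pow (g := fun y => if y ∈ Ico (x - w) x then ENNReal.ofReal b else 1)
    (Measurable.ite measurableSet_Ico measurable_const measurable_const), Fintype.card_fin]
  gcongr
  exact lintegral_ite_mem_le_exp measurableSet_Ico hb hw hS

lemma one_le_ofReal_exp_mul_ofReal_exp_neg_pow {t K : ℝ} {N : ℕ} (ht : 0 ≤ t) (hN : N ≤ K) :
    1 ≤ ENNReal.ofReal (exp (t * K)) * ENNReal.ofReal (exp (-t)) ^ N := by
  rw [← ofReal_pow (exp_pos _).le, ← exp_nat_mul, ← ofReal_mul (exp_pos _).le, ← exp_add]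
  exact one_le_ofReal.2 (one_le_exp (by nlinarith))

lemma measure_card_Ico_le_le_exp {m : ℕ} {w t K : ℝ} (hw : 0 ≤ w) (ht : 0 ≤ t)
    (i : Fin (m + 1)) :
    (Measure.pi fun _ : Fin (m + 1) => unif)
      {X | w ≤ X i ∧
        ((Finset.univ.filter fun j => j ≠ i ∧ X i - w ≤ X j ∧ X j < X i).card : ℝ) ≤ K} ≤
      ENNReal.ofReal (exp (t * K - w * m * (1 - exp (-t)))) := by
  classical
  set c := ENNReal.ofReal (exp (t * K))
  set b := exp (-t)
  let g : ℝ → ℝ → ℝ≥0∞ := fun x y => if y ∈ Ico (x - w) x then ENNReal.ofReal b else 1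
  -- the Chernoff weight: on `{w ≤ X i}` it is `e^{tK} e^{-tN}`, `N` the count in the event
  let F : ℝ → (Fin m → ℝ) → ℝ≥0∞ := fun x y => c * (if w ≤ x then 1 else 0) * ∏ j, g x (y j)
  have hg : Measurable (Function.uncurry g) :=
    Measurable.ite ((measurableSet_le (measurable_fst.sub_const w) measurable_snd).inter
      (measurableSet_lt measurable_snd measurable_fst)) measurable_const measurable_const
  have hF : Measurable (Function.uncurry F) :=
    (measurable_const.mul (Measurable.ite (measurableSet_le measurable_const measurable_fst)
      measurable_const measurable_const)).mul <| Finset.measurable_prod _ fun j _ =>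
        hg.comp (measurable_fst.prodMk ((measurable_pi_apply j).comp measurable_snd))
  have hsub : {X : Fin (m + 1) → ℝ | w ≤ X i ∧
      ((Finset.univ.filter fun j => j ≠ i ∧ X i - w ≤ X j ∧ X j < X i).card : ℝ) ≤ K} ⊆
      {X | 1 ≤ F (X i) (fun j => X (i.succAbove j))} := by
    rintro X ⟨hwX, hK⟩
    rw [card_filter_ne_eq_card_filter_succAbove i fun j => X i - w ≤ X j ∧ X j < X i] at hK
    simp only [mem_ofPred_eq, F, g, if_pos hwX, mul_one, ← Finset.prod_filter, Finset.prod_const,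
      mem_Ico]
    exact one_le_ofReal_exp_mul_ofReal_exp_neg_pow ht hK
  have hinner : ∀ᵐ x ∂unif, ∫⁻ y, F x y ∂(Measure.pi fun _ => unif) ≤
      c * ENNReal.ofReal (exp (-(w * (1 - b)))) ^ m := by
    filter_upwards [(ae_restrict_mem measurableSet_Icc : ∀ᵐ x ∂unif, x ∈ Icc 0 1)] with x hx
    have hprod : Measurable fun y : Fin m → ℝ => ∏ j, g x (y j) :=
      Finset.measurable_prod _ fun j _ => hg.comp (measurable_prodMk_left.comp
        (measurable_pi_apply j))
    rw [lintegral_const_mul _ hprod]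
    split_ifs with hwx
    · rw [mul_one]
      gcongr
      exact lintegral_pi_unif_prod_ite_Ico_le m hw hwx hx.2 (exp_pos _).le
    · simp
  calc _ ≤ _ := measure_mono hsub
    _ ≤ ∫⁻ X, F (X i) (fun j => X (i.succAbove j)) ∂(Measure.pi fun _ => unif) := by
      have := mul_meas_ge_le_lintegral (μ := Measure.pi fun _ => unif)
        (hF.comp (MeasurableEquiv.piFinSuccAbove (fun _ => ℝ) i).measurable) 1
      rwa [one_mul] at this
    _ = ∫⁻ x, ∫⁻ y, F x y ∂(Measure.pi fun _ => unif) ∂unif := lintegral_pi_succAbove i hF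
    _ ≤ ∫⁻ _, c * ENNReal.ofReal (exp (-(w * (1 - b)))) ^ m ∂unif := lintegral_mono_ae hinner
    _ = _ := by
      rw [lintegral_const, measure_univ, mul_one, ← ofReal_pow (exp_pos _).le, ← exp_nat_mul,
        ← ofReal_mul (exp_pos _).le, ← exp_add]
      ring_nf

lemma exp_neg_one_div_six_le : exp (-(1 / 6)) ≤ 61 / 72 := by
  have := quadratic_le_exp_of_nonneg (x := 1 / 6) (by norm_num)
  rw [exp_neg, inv_le_comm₀ (exp_pos _) (by norm_num)]
  linarith

/-- For `X_1, …, X_n` i.i.d. uniform on `[0,1]` and `α > 0`, the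
probability that some index `i` with `X_i ≥ 3α` has at most `(5/2)·α·(n-1)` indices
`j ≠ i` with `X_i - 3α ≤ X_j < X_i` is at most `n · exp(-α(n-1)/24)`. -/
theorem stmt3 (n : ℕ) (α : ℝ) (hα : 0 < α) :
    (Measure.pi fun _ : Fin n => unif)
      {X | ∃ i : Fin n, 3 * α ≤ X i ∧
        ((Finset.univ.filter fun j => j ≠ i ∧ X i - 3*α ≤ X j ∧ X j < X i).card : ℝ) ≤
          (5/2) * α * ((n : ℝ) - 1)} ≤
      ENNReal.ofReal (n * Real.exp (-α * ((n : ℝ) - 1) / 24)) := by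
  obtain _ | m := n
  · simp
  have hm : ((m + 1 : ℕ) : ℝ) - 1 = m := by push_cast; ring
  have hexponent : 1 / 6 * (5 / 2 * α * m) - 3 * α * m * (1 - exp (-(1 / 6))) ≤ -α * m / 24 := by
    nlinarith [mul_le_mul_of_nonneg_left exp_neg_one_div_six_le
      (by positivity : (0 : ℝ) ≤ α * m)]
  rw [hm, ofPred_exists]
  calc _ ≤ ∑ i, (Measure.pi fun _ : Fin (m + 1) => unif) {X | 3 * α ≤ X i ∧
          ((Finset.univ.filter fun j => j ≠ i ∧ X i - 3*α ≤ X j ∧ X j < X i).card : ℝ) ≤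
            5 / 2 * α * m} := measure_iUnion_fintype_le _ _
    _ ≤ ∑ _i : Fin (m + 1), ENNReal.ofReal (exp (-α * m / 24)) :=
      Finset.sum_le_sum fun i _ => (measure_card_Ico_le_le_exp (by positivity)
        (by norm_num : (0 : ℝ) ≤ 1 / 6) i).trans (ofReal_le_ofReal (exp_le_exp.2 hexponent))
    _ = _ := by
      rw [Finset.sum_const, Finset.card_univ, Fintype.card_fin, nsmul_eq_mul,
        ENNReal.ofReal_mul (by positivity), ENNReal.ofReal_natCast]

end
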